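/- arXiv:2312.00885 — 2 statements merged into one kernel-verified Lean document; each statement's English description precedes it below -/
import Mathlib

section
/- Let C be a minimal linear [n,k]_2 code. Then the code obtained from C by appending a parity bit to every codeword (i.e., extending each codeword c by the coordinate Σ_i c_i) is a 2-divisible minimal linear [n+1,k]_2 code. Consequently m(k,2;2) ≤ m(k,2;1) + 1. -/
/-- The Hamming weight of a word: the number of nonzero coordinates. -/
noncomputable def wt {ι F : Type*} [Zero F] (c : ι → F) : ℕ := Set.ncard {i | c i ≠ 0}

/-- A linear code (a submodule of `ι → F`) is minimal if the support of every nonzero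
codeword is minimal with respect to inclusion among supports of nonzero codewords. -/
def IsMinimalCode {ι F : Type*} [Semiring F] (C : Submodule F (ι → F)) : Prop :=
  ∀ c ∈ C, c ≠ 0 → ∀ u ∈ C, u ≠ 0 →
    {i | u i ≠ 0} ⊆ {i | c i ≠ 0} → {i | u i ≠ 0} = {i | c i ≠ 0}

/-- `mDiv F k Δ` is the minimum possible length `n` of a `Δ`-divisible minimal `[n,k]` code
over the field `F`; over `F = ZMod 2` this is `m(k,2;Δ)`, and `mDiv (ZMod 2) k 1 = m(k,2)`. -/
noncomputable def mDiv (F : Type*) [Field F] (k Δ : ℕ) : ℕ :=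
  sInf {n : ℕ | ∃ C : Submodule F (Fin n → F),
    Module.finrank F C = k ∧ IsMinimalCode C ∧ ∀ c ∈ C, Δ ∣ wt c}

/-- Extension by a parity bit: the word `c` of length `n` is extended by the extra
coordinate `∑ i, c i`. -/
def parityExt (F : Type*) [CommRing F] (n : ℕ) : (Fin n → F) →ₗ[F] (Fin (n + 1) → F) where
  toFun c := fun j => if h : (j : ℕ) < n then c ⟨j, h⟩ else ∑ i, c i
  map_add' c d := by
    funext j
    by_cases h : (j : ℕ) < n <;> simp [h, Finset.sum_add_distrib]
  map_smul' a c := by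
    funext j
    by_cases h : (j : ℕ) < n <;> simp [h, Finset.mul_sum]

/-! The parity extension is injective and makes every weight even, since over `𝔽₂` the weight
of a word is its coordinate sum mod 2. Minimality survives because a binary word is determined
by its support: if the supports of two extended codewords are nested, so are those of the
original codewords, hence these are equal by minimality of `C`, and so are their extensions.
Applied to a minimal code of length `m(k,2)` this gives `m(k,2;2) ≤ m(k,2) + 1`. -/

namespace ZMod

lemma eq_one_of_ne_zero_two : ∀ {x : ZMod 2}, x ≠ 0 → x = 1 := by decide

end ZMod

section Binary

variable {ι : Type*}

lemma binary_eq_of_support_eq {u c : ι → ZMod 2} (h : {i | u i ≠ 0} = {i | c i ≠ 0}) :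
    u = c := by
  funext i
  have hi : u i ≠ 0 ↔ c i ≠ 0 := Set.ext_iff.mp h i
  by_cases hc : c i = 0
  · rw [hc]
    by_contra hu
    exact hi.mp hu hc
  · rw [ZMod.eq_one_of_ne_zero_two (hi.mpr hc), ZMod.eq_one_of_ne_zero_two hc]

lemma natCast_wt_eq_sum [Fintype ι] (c : ι → ZMod 2) : (wt c : ZMod 2) = ∑ i, c i := by
  classical
  have hc : ∀ i, c i = if c i ≠ 0 then 1 else 0 := fun i => by
    split_ifs with h
    · exact ZMod.eq_one_of_ne_zero_two h
    · exact not_not.mp h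
  rw [Finset.sum_congr rfl fun i _ => hc i, Finset.sum_boole, wt, Set.ncard_eq_toFinset_card',
    Set.toFinset_ofPred]

end Binary

section ParityExtension

variable {F : Type*} [CommRing F] {n : ℕ}

@[simp]
lemma parityExt_castSucc (c : Fin n → F) (i : Fin n) : parityExt F n c i.castSucc = c i := by
  simp [parityExt]

@[simp]
lemma parityExt_last (c : Fin n → F) : parityExt F n c (Fin.last n) = ∑ i, c i := by
  simp [parityExt]

lemma parityExt_injective : Function.Injective (parityExt F n) := fun c d h =>
  funext fun i => by simpa using congrFun h i.castSucc

lemma finrank_map_parityExt (C : Submodule F (Fin n → F)) :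
    Module.finrank F (C.map (parityExt F n)) = Module.finrank F C :=
  (LinearEquiv.finrank_eq (C.equivMapOfInjective _ parityExt_injective)).symm

lemma sum_parityExt [CharP F 2] (c : Fin n → F) : ∑ j, parityExt F n c j = 0 := by
  simp [Fin.sum_univ_castSucc, CharTwo.add_self_eq_zero]

end ParityExtension

lemma two_dvd_wt_of_mem_map_parityExt {n : ℕ} {C : Submodule (ZMod 2) (Fin n → ZMod 2)}
    {c : Fin (n + 1) → ZMod 2} (hc : c ∈ C.map (parityExt (ZMod 2) n)) : 2 ∣ wt c := by
  obtain ⟨c, -, rfl⟩ := hc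
  exact (ZMod.natCast_eq_zero_iff _ 2).mp <| by rw [natCast_wt_eq_sum, sum_parityExt]

lemma IsMinimalCode.map_parityExt {n : ℕ} {C : Submodule (ZMod 2) (Fin n → ZMod 2)}
    (hmin : IsMinimalCode C) : IsMinimalCode (C.map (parityExt (ZMod 2) n)) := by
  rintro _ ⟨c, hc, rfl⟩ hc0 _ ⟨u, hu, rfl⟩ hu0 hsub
  have hsub' : {i | u i ≠ 0} ⊆ {i | c i ≠ 0} := fun i hi => by
    simpa using @hsub i.castSucc (by simpa using hi)
  have hc0' : c ≠ 0 := by rintro rfl; exact hc0 (map_zero _)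
  have hu0' : u ≠ 0 := by rintro rfl; exact hu0 (map_zero _)
  rw [binary_eq_of_support_eq (hmin c hc hc0' u hu hu0' hsub')]

lemma mDiv_le {F : Type*} [Field F] {k Δ n : ℕ} (C : Submodule F (Fin n → F))
    (hk : Module.finrank F C = k) (hmin : IsMinimalCode C) (hdiv : ∀ c ∈ C, Δ ∣ wt c) :
    mDiv F k Δ ≤ n :=
  Nat.sInf_le ⟨C, hk, hmin, hdiv⟩

lemma exists_isMinimalCode_of_length_mDiv_one {F : Type*} [Field F] {k n : ℕ}
    (C : Submodule F (Fin n → F)) (hk : Module.finrank F C = k) (hmin : IsMinimalCode C) :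
    ∃ C' : Submodule F (Fin (mDiv F k 1) → F), Module.finrank F C' = k ∧ IsMinimalCode C' := by
  obtain ⟨C', hk', hmin', -⟩ := Nat.sInf_mem (⟨n, C, hk, hmin, fun c _ => one_dvd _⟩ :
    {m : ℕ | ∃ C : Submodule F (Fin m → F),
      Module.finrank F C = k ∧ IsMinimalCode C ∧ ∀ c ∈ C, 1 ∣ wt c}.Nonempty)
  exact ⟨C', hk', hmin'⟩

/-- Let `C` be a minimal linear `[n,k]_2` code. Then the code obtained from `C` by appending
a parity bit to every codeword is a `2`-divisible minimal linear `[n+1,k]_2` code.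
Consequently `m(k,2;2) ≤ m(k,2;1) + 1`. -/
theorem parity_extension_of_minimal_code
    (n k : ℕ) (C : Submodule (ZMod 2) (Fin n → ZMod 2))
    (hk : Module.finrank (ZMod 2) C = k) (hmin : IsMinimalCode C) :
    Module.finrank (ZMod 2) (C.map (parityExt (ZMod 2) n)) = k ∧
    IsMinimalCode (C.map (parityExt (ZMod 2) n)) ∧
    (∀ c ∈ C.map (parityExt (ZMod 2) n), 2 ∣ wt c) ∧
    mDiv (ZMod 2) k 2 ≤ mDiv (ZMod 2) k 1 + 1 := by
  refine ⟨(finrank_map_parityExt C).trans hk, hmin.map_parityExt,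
    fun _ => two_dvd_wt_of_mem_map_parityExt, ?_⟩
  obtain ⟨C', hk', hmin'⟩ := exists_isMinimalCode_of_length_mDiv_one C hk hmin
  exact mDiv_le _ ((finrank_map_parityExt C').trans hk') hmin'.map_parityExt
    (fun _ => two_dvd_wt_of_mem_map_parityExt)
end

section
/- Let q be a prime power and k ≥ 1 and r ≥ k-1 integers. Then m(k,q;q^r) = q^{r-k+1}·(q^k-1)/(q-1), i.e., the minimum possible length of a q^r-divisible minimal k-dimensional linear code over F_q is q^{r-k+1}·(q^k-1)/(q-1), attained by the q^{r-k+1}-fold repetition of the k-dimensional simplex code. -/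
/-!
The `q^(r+1-k)`-fold repetition of the `k`-dimensional simplex code has every nonzero weight
equal to `q^(r+1-k) · q^(k-1) = q^r`; a constant-weight code is minimal. Conversely, in an
`[n,k]` code a coordinate is a linear functional, nonzero on at most `q^(k-1)(q-1)` codewords,
so summing weights over the code gives the Plotkin bound `(q^k - 1) q^r ≤ n q^(k-1) (q-1)`,
which is the claimed length.
-/

open Module
open scoped LinearAlgebra.Projectivization

section Weight

variable {ι F : Type*}

lemma wt_eq_sum [Fintype ι] [Zero F] [DecidableEq F] (c : ι → F) :
    wt c = ∑ i, if c i = 0 then 0 else 1 := by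
  rw [wt, Set.ncard_eq_toFinset_card', Set.toFinset_ofPred, Finset.card_filter]
  exact Finset.sum_congr rfl fun i _ => by split_ifs <;> simp_all

lemma wt_pos [Finite ι] [Zero F] {c : ι → F} (hc : c ≠ 0) : 0 < wt c :=
  (Set.ncard_pos (Set.toFinite _)).2 (Function.ne_iff.1 hc)

lemma wt_comp_equiv {κ : Type*} [Zero F] (e : κ ≃ ι) (c : ι → F) : wt (c ∘ e) = wt c := by
  rw [wt, wt, ← Set.ncard_preimage_of_injective_subset_range e.injective (by simp)]
  rfl

lemma wt_comp_snd {κ : Type*} [Finite κ] [Finite ι] [Zero F] (c : ι → F) :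
    wt (c ∘ Prod.snd : κ × ι → F) = Nat.card κ * wt c := by
  rw [wt, wt, ← Set.ncard_univ, ← Set.ncard_prod]
  congr 1
  ext z
  simp

lemma IsMinimalCode.of_wt_eq [Finite ι] [Semiring F] {C : Submodule F (ι → F)} {w : ℕ}
    (h : ∀ c ∈ C, c ≠ 0 → wt c = w) : IsMinimalCode C := by
  intro c hc hc0 u hu hu0 hsub
  exact Set.eq_of_subset_of_ncard_le hsub ((h c hc hc0).trans (h u hu hu0).symm).le
    (Set.toFinite _)

end Weight

namespace Module.Dual

variable {K V : Type*} [Field K] [Finite K] [AddCommGroup V] [Module K V] [Module.Finite K V]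

lemma natCard_apply_ne_zero {f : Dual K V} (hf : f ≠ 0) :
    Nat.card {v : V // f v ≠ 0} = Nat.card K ^ (finrank K V - 1) * (Nat.card K - 1) := by
  classical
  have : Finite V := Module.finite_of_finite K
  have : Fintype V := Fintype.ofFinite V
  have hV := f.finrank_ker_add_one_of_ne_zero hf
  have hker : Fintype.card {v : V // f v = 0} = Nat.card K ^ (finrank K V - 1) := by
    rw [← hV, Nat.add_sub_cancel, ← natCard_eq_pow_finrank (K := K), Fintype.card_eq_nat_card]
    rfl
  rw [Nat.card_eq_fintype_card, Fintype.card_subtype_compl, hker, Fintype.card_eq_nat_card,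
    natCard_eq_pow_finrank (K := K), ← hV, Nat.add_sub_cancel, pow_succ, Nat.mul_sub_one]

lemma natCard_apply_ne_zero_le (f : Dual K V) :
    Nat.card {v : V // f v ≠ 0} ≤ Nat.card K ^ (finrank K V - 1) * (Nat.card K - 1) := by
  rcases eq_or_ne f 0 with rfl | hf
  · simp
  · exact (natCard_apply_ne_zero hf).le

end Module.Dual

namespace Projectivization

variable {K V : Type*} [Field K] [AddCommGroup V] [Module K V]

lemma natCard_subtype_mul (P : ℙ K V → Prop) :
    Nat.card {p // P p} * (Nat.card K - 1) =
      Nat.card {v : {v : V // v ≠ 0} // P (mk K v.1 v.2)} := by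
  rw [← Nat.card_units, ← Nat.card_prod]
  exact Nat.card_congr (((nonZeroEquivProjectivizationProdUnits K V).subtypeEquiv
    fun _ => Iff.rfl).trans Equiv.prodSubtypeFstEquivSubtypeProd).symm

end Projectivization

section Plotkin

variable {ι F : Type*} [Fintype ι] [Field F] [Finite F]

lemma sum_wt_le (C : Submodule F (ι → F)) [Fintype C] :
    ∑ c : C, wt (c : ι → F) ≤
      Fintype.card ι * (Nat.card F ^ (finrank F C - 1) * (Nat.card F - 1)) := by
  classical
  have hswap : ∑ c : C, wt (c : ι → F) = ∑ i, Nat.card {c : C // (c : ι → F) i ≠ 0} := by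
    simp_rw [wt_eq_sum, Nat.card_eq_fintype_card, Fintype.card_subtype, Finset.card_filter]
    rw [Finset.sum_comm]
    simp_rw [ite_not]
  rw [hswap, ← smul_eq_mul, ← Finset.card_univ, ← Finset.sum_const]
  exact Finset.sum_le_sum fun i _ =>
    Dual.natCard_apply_ne_zero_le ((LinearMap.proj i).comp C.subtype)

theorem plotkin_bound (C : Submodule F (ι → F)) {d : ℕ} (hd : ∀ c ∈ C, c ≠ 0 → d ≤ wt c) :
    (Nat.card F ^ finrank F C - 1) * d ≤
      Fintype.card ι * (Nat.card F ^ (finrank F C - 1) * (Nat.card F - 1)) := by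
  classical
  have : Fintype C := Fintype.ofFinite C
  have hcard : (Finset.univ.erase (0 : C)).card = Nat.card F ^ finrank F C - 1 := by
    rw [Finset.card_erase_of_mem (Finset.mem_univ _), Finset.card_univ,
      Fintype.card_eq_nat_card, natCard_eq_pow_finrank (K := F)]
  calc (Nat.card F ^ finrank F C - 1) * d
      = ∑ _c ∈ Finset.univ.erase (0 : C), d := by rw [Finset.sum_const, hcard, smul_eq_mul]
    _ ≤ ∑ c ∈ Finset.univ.erase (0 : C), wt (c : ι → F) :=
        Finset.sum_le_sum fun c hc =>
          hd c c.2 (by simpa using (Finset.mem_erase.1 hc).1)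
    _ ≤ ∑ c : C, wt (c : ι → F) := Finset.sum_le_sum_of_subset (Finset.erase_subset _ _)
    _ ≤ _ := sum_wt_le C

end Plotkin

section Simplex

variable (K V : Type*) [Field K] [AddCommGroup V] [Module K V]

/-- The simplex code as the image of the dual space: its generator matrix has one representative
of each point of `ℙ K V` as a column. -/
noncomputable def simplexEncoder : Dual K V →ₗ[K] (ℙ K V → K) :=
  LinearMap.pi fun p => Dual.eval K V p.rep

noncomputable def repeatedSimplexCode (M : ℕ) : Submodule K (Fin M × ℙ K V → K) :=
  LinearMap.range (LinearMap.funLeft K K Prod.snd ∘ₗ simplexEncoder K V)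

variable {K V}

lemma Module.Dual.apply_mk_rep_ne_zero_iff (f : Dual K V) {v : V} (hv : v ≠ 0) :
    f (Projectivization.mk K v hv).rep ≠ 0 ↔ f v ≠ 0 := by
  obtain ⟨a, ha⟩ := Projectivization.exists_smul_eq_mk_rep K v hv
  rw [← ha, Units.smul_def, map_smul, smul_eq_mul, mul_ne_zero_iff, and_iff_right a.ne_zero]

lemma simplexEncoder_injective : Function.Injective (simplexEncoder K V) := by
  refine (injective_iff_map_eq_zero _).2 fun f hf => LinearMap.ext fun v => ?_
  by_contra hfv
  have hv : v ≠ 0 := by rintro rfl; exact hfv (map_zero f)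
  exact (f.apply_mk_rep_ne_zero_iff hv).2 hfv (congrFun hf _)

lemma wt_simplexEncoder [Finite K] [Module.Finite K V] {f : Dual K V} (hf : f ≠ 0) :
    wt (simplexEncoder K V f) = Nat.card K ^ (finrank K V - 1) := by
  have hK : 0 < Nat.card K - 1 := Nat.sub_pos_of_lt Finite.one_lt_card
  refine Nat.eq_of_mul_eq_mul_right hK ?_
  have hpoints := Projectivization.natCard_subtype_mul (fun p : ℙ K V => f p.rep ≠ 0)
  have hvectors : Nat.card {v : {v : V // v ≠ 0} // f (Projectivization.mk K v.1 v.2).rep ≠ 0} =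
      Nat.card {v : V // f v ≠ 0} :=
    Nat.card_congr
      { toFun v := ⟨v.1.1, (f.apply_mk_rep_ne_zero_iff v.1.2).1 v.2⟩
        invFun v := ⟨⟨v.1, fun h => v.2 (h ▸ map_zero f)⟩,
          (f.apply_mk_rep_ne_zero_iff _).2 v.2⟩ }
  exact hpoints.trans (hvectors.trans (Dual.natCard_apply_ne_zero hf))

lemma finrank_repeatedSimplexCode {M : ℕ} (hM : 0 < M) :
    finrank K (repeatedSimplexCode K V M) = finrank K V := by
  have : Nonempty (Fin M) := ⟨⟨0, hM⟩⟩
  rw [repeatedSimplexCode, LinearMap.finrank_range_of_inj, Subspace.dual_finrank_eq]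
  exact (LinearMap.funLeft_injective_of_surjective K K _ Prod.snd_surjective).comp
    simplexEncoder_injective

lemma wt_of_mem_repeatedSimplexCode [Finite K] [Module.Finite K V] {M : ℕ}
    {c : Fin M × ℙ K V → K} (hc : c ∈ repeatedSimplexCode K V M) (hc0 : c ≠ 0) :
    wt c = M * Nat.card K ^ (finrank K V - 1) := by
  obtain ⟨f, rfl⟩ := hc
  have hf : f ≠ 0 := by rintro rfl; exact hc0 (map_zero _)
  have : Finite V := Module.finite_of_finite K
  calc wt (simplexEncoder K V f ∘ Prod.snd : Fin M × ℙ K V → K)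
      = Nat.card (Fin M) * wt (simplexEncoder K V f) := wt_comp_snd _
    _ = M * Nat.card K ^ (finrank K V - 1) := by rw [Nat.card_fin, wt_simplexEncoder hf]

end Simplex

section Divisible

variable {F : Type*} [Field F] [Finite F]

lemma le_length_of_pow_dvd_wt {n k r : ℕ} (hk : 1 ≤ k) (hkr : k ≤ r + 1)
    (C : Submodule F (Fin n → F)) (hC : finrank F C = k)
    (hdvd : ∀ c ∈ C, Nat.card F ^ r ∣ wt c) :
    Nat.card F ^ (r + 1 - k) * ((Nat.card F ^ k - 1) / (Nat.card F - 1)) ≤ n := by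
  set q := Nat.card F
  have hq : 1 < q := Finite.one_lt_card
  have hplotkin := plotkin_bound C fun c hc hc0 => Nat.le_of_dvd (wt_pos hc0) (hdvd c hc)
  rw [hC, Fintype.card_fin] at hplotkin
  have hpos : 0 < q ^ (k - 1) * (q - 1) := Nat.mul_pos (by positivity) (by omega)
  refine Nat.le_of_mul_le_mul_right ?_ hpos
  calc q ^ (r + 1 - k) * ((q ^ k - 1) / (q - 1)) * (q ^ (k - 1) * (q - 1))
      = (q ^ (r + 1 - k) * q ^ (k - 1)) * ((q ^ k - 1) / (q - 1) * (q - 1)) := by ring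
    _ = (q ^ k - 1) * q ^ r := by
        rw [← pow_add, Nat.div_mul_cancel (by simpa using Nat.sub_dvd_pow_sub_pow q 1 k),
          mul_comm]
        congr 2
        omega
    _ ≤ n * (q ^ (k - 1) * (q - 1)) := hplotkin

variable (F) in
lemma exists_constant_wt_code (k M : ℕ) (hM : 0 < M) :
    ∃ C : Submodule F (Fin (M * ((Nat.card F ^ k - 1) / (Nat.card F - 1))) → F),
      finrank F C = k ∧ ∀ c ∈ C, c ≠ 0 → wt c = M * Nat.card F ^ (k - 1) := by
  have hcard : Nat.card (Fin M × ℙ F (Fin k → F)) =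
      M * ((Nat.card F ^ k - 1) / (Nat.card F - 1)) := by
    rw [Nat.card_prod, Nat.card_fin, Projectivization.card'', Nat.card_fun, Nat.card_fin]
  let e := (finCongr hcard.symm).trans (Finite.equivFin (Fin M × ℙ F (Fin k → F))).symm
  refine ⟨(repeatedSimplexCode F (Fin k → F) M).map (LinearEquiv.funCongrLeft F F e).toLinearMap,
    ?_, ?_⟩
  · rw [LinearEquiv.finrank_map_eq, finrank_repeatedSimplexCode hM, finrank_fin_fun]
  · rintro _ ⟨c, hc, rfl⟩ hc0
    have hc0' : c ≠ 0 := by rintro rfl; exact hc0 (map_zero _)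
    have := wt_of_mem_repeatedSimplexCode hc hc0'
    rw [finrank_fin_fun] at this
    exact (wt_comp_equiv e c).trans this

end Divisible

theorem mDiv_high_power_general
    (q k r : ℕ) (hk : 1 ≤ k) (hr : k - 1 ≤ r)
    (F : Type*) [Field F] [Fintype F] (hF : Fintype.card F = q) :
    mDiv F k (q ^ r) = q ^ (r + 1 - k) * ((q ^ k - 1) / (q - 1)) ∧
    ∃ C : Submodule F (Fin (q ^ (r + 1 - k) * ((q ^ k - 1) / (q - 1))) → F),
      Module.finrank F C = k ∧ IsMinimalCode C ∧ ∀ c ∈ C, q ^ r ∣ wt c := by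
  rw [Fintype.card_eq_nat_card] at hF
  subst hF
  obtain ⟨C, hCk, hCwt⟩ :=
    exists_constant_wt_code F k (Nat.card F ^ (r + 1 - k)) (pow_pos Nat.card_pos _)
  have hwt : ∀ c ∈ C, c ≠ 0 → wt c = Nat.card F ^ r := by
    intro c hc hc0
    rw [hCwt c hc hc0, ← pow_add]
    congr 1
    omega
  have hdvd : ∀ c ∈ C, Nat.card F ^ r ∣ wt c := by
    intro c hc
    rcases eq_or_ne c 0 with rfl | hc0
    · simp [wt]
    · exact (hwt c hc hc0).symm.dvd
  have hC := IsMinimalCode.of_wt_eq hwt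
  refine ⟨le_antisymm (Nat.sInf_le ⟨C, hCk, hC, hdvd⟩) (le_csInf ⟨_, C, hCk, hC, hdvd⟩ ?_),
    C, hCk, hC, hdvd⟩
  rintro n ⟨D, hDk, -, hDdvd⟩
  exact le_length_of_pow_dvd_wt hk (by omega) D hDk hDdvd

/-- Let `q` be a prime power and `k ≥ 1`, `r ≥ k-1` integers. Then
`m(k,q;q^r) = q^(r-k+1)·(q^k-1)/(q-1)`, attained by the `q^(r-k+1)`-fold repetition
of the `k`-dimensional simplex code. -/
theorem mDiv_high_power
    (q k r : ℕ) (hq : IsPrimePow q) (hk : 1 ≤ k) (hr : k - 1 ≤ r)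
    (F : Type*) [Field F] [Fintype F] (hF : Fintype.card F = q) :
    mDiv F k (q ^ r) = q ^ (r + 1 - k) * ((q ^ k - 1) / (q - 1)) ∧
    ∃ C : Submodule F (Fin (q ^ (r + 1 - k) * ((q ^ k - 1) / (q - 1))) → F),
      Module.finrank F C = k ∧ IsMinimalCode C ∧ ∀ c ∈ C, q ^ r ∣ wt c :=
  mDiv_high_power_general q k r hk hr F hF
end
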